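/- Let X ⊆ ℝⁿ be a nonempty compact convex set, let g : ℝⁿ → ℝ be continuous on X and L-weakly convex on X (g + (L/2)‖·‖² convex on X) for some L > 0, let 0 < λ < 1/L, let x ∈ ℝⁿ, and let x̂ ∈ X be the unique minimizer over X of x' ↦ g(x') + (1/(2λ))‖x' − x‖². Then the vector u := (x − x̂)/λ is a Fréchet subgradient of g at x̂ relative to X, i.e., liminf_{x' → x̂, x' ∈ X, x' ≠ x̂} (g(x') − g(x̂) − ⟪u, x' − x̂⟫)/‖x' − x̂‖ ≥ 0. Consequently, if ‖x − x̂‖ ≤ λ·ε for some ε > 0, then x is within distance λ·ε of a point x̂ of X that admits a Fréchet subgradient of g relative to X of norm at most ε. -/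

import Mathlib

/-!
Minimality of `xhat` against `g + ‖· - x‖² / (2λ)` gives, after expanding the square,
`g z ≥ g xhat + ⟪u, z - xhat⟫ - ‖z - xhat‖² / (2λ)` on `X` with `u = (x - xhat) / λ`; the quadratic
error is `o(‖z - xhat‖)`, so `u` is a Fréchet subgradient. For the second part take `z = xhat`.
-/

open Filter Topology

theorem Real.zero_le_liminf_of_tendsto_of_le {α : Type*} {f : Filter α} {u v : α → ℝ}
    (hv : Tendsto v f (𝓝 0)) (hvu : v ≤ᶠ[f] u) : 0 ≤ liminf u f := by
  by_cases hco : IsCoboundedUnder (· ≥ ·) f u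
  · refine le_of_forall_lt_imp_le_of_dense fun c hc => le_liminf_of_le hco ?_
    filter_upwards [hv.eventually (lt_mem_nhds hc), hvu] with x hcv hvux
    exact hcv.le.trans hvux
  · -- a liminf in `ℝ` that is not cobounded is the junk value `sSup` of an unbounded set, `0`
    rw [liminf_eq, Real.sSup_of_not_bddAbove fun hbdd => hco ?_]
    obtain ⟨b, hb⟩ := hbdd
    exact ⟨b, fun c hc => hb hc⟩

section

variable {E : Type*} [NormedAddCommGroup E] [InnerProductSpace ℝ E]

def HasFrechetSubgradientWithin (g : E → ℝ) (X : Set E) (a u : E) : Prop :=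
  0 ≤ liminf (fun x' => (g x' - g a - inner ℝ u (x' - a)) / ‖x' - a‖) (𝓝[X \ {a}] a)

theorem hasFrechetSubgradientWithin_of_forall_neg_mul_sq_le {g : E → ℝ} {X : Set E} {a u : E}
    (c : ℝ)
    (h : ∀ z ∈ X, -(c * ‖z - a‖ ^ 2) ≤ g z - g a - inner ℝ u (z - a)) :
    HasFrechetSubgradientWithin g X a u := by
  have hv : Tendsto (fun z => -(c * ‖z - a‖)) (𝓝[X \ {a}] a) (𝓝 0) := by
    have : Tendsto (fun z => -(c * ‖z - a‖)) (𝓝 a) (𝓝 (-(c * ‖a - a‖))) :=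
      ((continuous_id.sub continuous_const).norm.const_mul c).neg.tendsto a
    simpa using this.mono_left nhdsWithin_le_nhds
  refine Real.zero_le_liminf_of_tendsto_of_le hv (eventually_nhdsWithin_of_forall ?_)
  rintro z ⟨hzX, hza⟩
  have hpos : 0 < ‖z - a‖ := norm_pos_iff.mpr (sub_ne_zero.mpr hza)
  rw [le_div_iff₀ hpos]
  linarith [h z hzX]

theorem IsMinOn.neg_mul_sq_le_sub_sub_inner {g : E → ℝ} {X : Set E} {x a : E} {lam : ℝ}
    (hlam : lam ≠ 0) (hmin : IsMinOn (fun z => g z + 1 / (2 * lam) * ‖z - x‖ ^ 2) X a)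
    {z : E} (hz : z ∈ X) :
    -(1 / (2 * lam) * ‖z - a‖ ^ 2) ≤ g z - g a - inner ℝ ((1 / lam) • (x - a)) (z - a) := by
  have hexpand : ‖z - x‖ ^ 2 = ‖z - a‖ ^ 2 - 2 * inner ℝ (x - a) (z - a) + ‖a - x‖ ^ 2 := by
    rw [show z - x = (z - a) - (x - a) by abel, norm_sub_sq_real, real_inner_comm,
      ← norm_neg (x - a), neg_sub]
  have hmin_z := isMinOn_iff.mp hmin z hz
  rw [hexpand] at hmin_z
  rw [real_inner_smul_left, show 1 / lam = 2 * (1 / (2 * lam)) by field_simp]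
  linarith

end

theorem stmt_7_general {n : ℕ}
    (X : Set (EuclideanSpace ℝ (Fin n)))
    (g : EuclideanSpace ℝ (Fin n) → ℝ)
    (lam : ℝ) (hlam : 0 < lam)
    (x : EuclideanSpace ℝ (Fin n))
    (xhat : EuclideanSpace ℝ (Fin n)) (hxhatmem : xhat ∈ X)
    (hxhatmin : ∀ z ∈ X,
      g xhat + 1 / (2 * lam) * ‖xhat - x‖ ^ 2 ≤ g z + 1 / (2 * lam) * ‖z - x‖ ^ 2) :
    (0 ≤ Filter.liminf
        (fun x' => (g x' - g xhat - (inner ℝ ((1 / lam) • (x - xhat)) (x' - xhat) : ℝ)) / ‖x' - xhat‖)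
        (nhdsWithin xhat (X \ {xhat}))) ∧
    ∀ ε : ℝ, 0 < ε → ‖x - xhat‖ ≤ lam * ε →
      ∃ z ∈ X, ‖x - z‖ ≤ lam * ε ∧ ∃ u : EuclideanSpace ℝ (Fin n), ‖u‖ ≤ ε ∧
        0 ≤ Filter.liminf
          (fun x' => (g x' - g z - (inner ℝ u (x' - z) : ℝ)) / ‖x' - z‖)
          (nhdsWithin z (X \ {z})) := by
  have hsub : HasFrechetSubgradientWithin g X xhat ((1 / lam) • (x - xhat)) :=
    hasFrechetSubgradientWithin_of_forall_neg_mul_sq_le _ fun z hz =>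
      (isMinOn_iff.mpr hxhatmin).neg_mul_sq_le_sub_sub_inner hlam.ne' hz
  refine ⟨hsub, fun ε _ hdist => ⟨xhat, hxhatmem, hdist, _, ?_, hsub⟩⟩
  rw [norm_smul, Real.norm_of_nonneg (by positivity), one_div, inv_mul_le_iff₀ hlam]
  exact hdist

/-- If `x̂` is the unique minimizer over `X` of `x' ↦ g(x') + (1/(2λ))‖x'−x‖²`
for a continuous `L`-weakly convex `g` on a nonempty compact convex `X` with `0 < λ < 1/L`,
then `u = (x − x̂)/λ` is a Fréchet subgradient of `g` at `x̂` relative to `X`; consequently,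
if `‖x − x̂‖ ≤ λ·ε`, then `x` is within distance `λ·ε` of a point of `X` admitting a
Fréchet subgradient of `g` relative to `X` of norm at most `ε`. -/
theorem stmt_7 {n : ℕ}
    (X : Set (EuclideanSpace ℝ (Fin n)))
    (hXne : X.Nonempty) (hXcomp : IsCompact X) (hXconv : Convex ℝ X)
    (L : ℝ) (hL : 0 < L)
    (g : EuclideanSpace ℝ (Fin n) → ℝ) (hgc : ContinuousOn g X)
    (hwc : ConvexOn ℝ X (fun x => g x + L / 2 * ‖x‖ ^ 2))
    (lam : ℝ) (hlam : 0 < lam) (hlamL : lam < 1 / L)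
    (x : EuclideanSpace ℝ (Fin n))
    (xhat : EuclideanSpace ℝ (Fin n)) (hxhatmem : xhat ∈ X)
    (hxhatmin : ∀ z ∈ X,
      g xhat + 1 / (2 * lam) * ‖xhat - x‖ ^ 2 ≤ g z + 1 / (2 * lam) * ‖z - x‖ ^ 2) :
    (0 ≤ Filter.liminf
        (fun x' => (g x' - g xhat - (inner ℝ ((1 / lam) • (x - xhat)) (x' - xhat) : ℝ)) / ‖x' - xhat‖)
        (nhdsWithin xhat (X \ {xhat}))) ∧
    ∀ ε : ℝ, 0 < ε → ‖x - xhat‖ ≤ lam * ε →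
      ∃ z ∈ X, ‖x - z‖ ≤ lam * ε ∧ ∃ u : EuclideanSpace ℝ (Fin n), ‖u‖ ≤ ε ∧
        0 ≤ Filter.liminf
          (fun x' => (g x' - g z - (inner ℝ u (x' - z) : ℝ)) / ‖x' - z‖)
          (nhdsWithin z (X \ {z})) :=
  stmt_7_general X g lam hlam x xhat hxhatmem hxhatmin
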